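/- In the transition digraph of P_{n,3}, for pairwise distinct a,b,c,d ∈ [n], the numbers of walks from (a,b) to (c,d) of lengths 1, 2, 3, 4 are 0, 1, n−4, and (n−3)+(n−4)², respectively. -/
import Mathlib


/-- Vertices of the transition digraph of `P_{n,3}`: ordered pairs of distinct
elements of `[n]`. -/
abbrev TVtx (n : ℕ) := {p : Fin n × Fin n // p.1 ≠ p.2}

/-- Adjacency matrix (over ℕ) of the transition digraph of `P_{n,3}`: there is
an arc from `(a,b)` to `(c,d)` iff `b = c` and `a ≠ d`.  The `(u,v)` entry of
its `ℓ`-th power is the number of walks of length `ℓ` from `u` to `v`. -/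
def adjA (n : ℕ) : Matrix (TVtx n) (TVtx n) ℕ :=
  Matrix.of fun u v => if u.1.2 = v.1.1 ∧ u.1.1 ≠ v.1.2 then 1 else 0

lemma adjA_sq (n : ℕ) (u v : TVtx n) :
    ((adjA n) ^ 2) u v =
      if u.1.2 ≠ v.1.1 ∧ u.1.1 ≠ v.1.1 ∧ u.1.2 ≠ v.1.2 then 1 else 0 := by
  rw [sq, Matrix.mul_apply]
  by_cases h : u.1.2 ≠ v.1.1 ∧ u.1.1 ≠ v.1.1 ∧ u.1.2 ≠ v.1.2
  · rw [if_pos h]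
    rw [Finset.sum_eq_single (⟨(u.1.2, v.1.1), h.1⟩ : TVtx n)]
    · simp [adjA, h.2.1, h.2.2]
    · intro w _ hw
      simp only [adjA, Matrix.of_apply]
      split_ifs with h1 h2 <;> try simp
      exact absurd (Subtype.ext (Prod.ext h1.1.symm h2.1)) hw
    · intro hmem; exact absurd (Finset.mem_univ _) hmem
  · rw [if_neg h]
    apply Finset.sum_eq_zero
    intro w _
    simp only [adjA, Matrix.of_apply]
    split_ifs with h1 h2 <;> try simp
    exfalso
    exact h ⟨h1.1 ▸ (h2.1 ▸ w.prop), h2.1 ▸ h1.2, h1.1 ▸ h2.2⟩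

lemma boole_mul' (P Q : Prop) [Decidable P] [Decidable Q] :
    (if P then (1:ℕ) else 0) * (if Q then 1 else 0) = if P ∧ Q then 1 else 0 := by
  split_ifs <;> simp_all

lemma sum_tvtx (n : ℕ) (f : Fin n × Fin n → ℕ) :
    ∑ w : TVtx n, f w.1 = ∑ p : Fin n × Fin n, if p.1 ≠ p.2 then f p else 0 := by
  rw [← Finset.sum_filter]
  exact (Finset.sum_subtype _ (by simp) f).symm

lemma sum_boole_notmem (n : ℕ) (s : Finset (Fin n)) (k : ℕ) :
    (∑ x : Fin n, if x ∉ s then k else 0) = (n - s.card) * k := by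
  rw [← Finset.sum_filter, Finset.sum_const, smul_eq_mul, Finset.filter_not,
    Finset.filter_mem_eq_inter, Finset.univ_inter,
    Finset.card_sdiff_of_subset (Finset.subset_univ s), Finset.card_univ, Fintype.card_fin]

lemma sum_boole_ne4 (n : ℕ) (a b c d : Fin n) (hab : a ≠ b) (hac : a ≠ c)
    (had : a ≠ d) (hbc : b ≠ c) (hbd : b ≠ d) (hcd : c ≠ d) :
    (∑ y : Fin n, if y ≠ a ∧ y ≠ b ∧ y ≠ c ∧ y ≠ d then (1:ℕ) else 0) = n - 4 := by
  have h : (∑ y : Fin n, if y ≠ a ∧ y ≠ b ∧ y ≠ c ∧ y ≠ d then (1:ℕ) else 0)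
      = ∑ y : Fin n, if y ∉ ({a,b,c,d} : Finset (Fin n)) then (1:ℕ) else 0 := by
    apply Finset.sum_congr rfl; intro y _
    simp [Finset.mem_insert, not_or]
  rw [h, sum_boole_notmem]
  have hcard : ({a,b,c,d} : Finset (Fin n)).card = 4 := by
    simp [Finset.card_insert_of_notMem, hab, hac, had, hbc, hbd, hcd]
  rw [hcard, mul_one]

lemma sum_boole_ne3 (n : ℕ) (b c d : Fin n) (hbc : b ≠ c) (hbd : b ≠ d)
    (hcd : c ≠ d) :
    (∑ y : Fin n, if y ≠ b ∧ y ≠ c ∧ y ≠ d then (1:ℕ) else 0) = n - 3 := by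
  have h : (∑ y : Fin n, if y ≠ b ∧ y ≠ c ∧ y ≠ d then (1:ℕ) else 0)
      = ∑ y : Fin n, if y ∉ ({b,c,d} : Finset (Fin n)) then (1:ℕ) else 0 := by
    apply Finset.sum_congr rfl; intro y _
    simp [Finset.mem_insert, not_or]
  rw [h, sum_boole_notmem]
  have hcard : ({b,c,d} : Finset (Fin n)).card = 3 := by
    simp [Finset.card_insert_of_notMem, hbc, hbd, hcd]
  rw [hcard, mul_one]


theorem walks_ab_cd (n : ℕ) (a b c d : Fin n) (hab : a ≠ b) (hac : a ≠ c)
    (had : a ≠ d) (hbc : b ≠ c) (hbd : b ≠ d) (hcd : c ≠ d) :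
    ((adjA n) ^ 1) ⟨(a, b), hab⟩ ⟨(c, d), hcd⟩ = 0 ∧
    ((adjA n) ^ 2) ⟨(a, b), hab⟩ ⟨(c, d), hcd⟩ = 1 ∧
    ((adjA n) ^ 3) ⟨(a, b), hab⟩ ⟨(c, d), hcd⟩ = n - 4 ∧
    ((adjA n) ^ 4) ⟨(a, b), hab⟩ ⟨(c, d), hcd⟩ = (n - 3) + (n - 4) ^ 2 := by
  refine ⟨?_, ?_, ?_, ?_⟩
  · rw [pow_one]; simp [adjA, hbc]
  · rw [adjA_sq]; simp [hbc, hac, hbd]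
  ·
    have hpow : (adjA n) ^ 3 = adjA n * (adjA n) ^ 2 := by
      rw [pow_succ']
    rw [hpow, Matrix.mul_apply]
    calc
      ∑ w : TVtx n, adjA n ⟨(a, b), hab⟩ w * ((adjA n) ^ 2) w ⟨(c, d), hcd⟩
          = ∑ w : TVtx n, (fun p : Fin n × Fin n =>
              if p.1 = b ∧ p.2 ≠ a ∧ p.2 ≠ b ∧ p.2 ≠ c ∧ p.2 ≠ d then (1:ℕ) else 0) w.1 := by
            apply Finset.sum_congr rfl
            intro w _
            rw [adjA_sq]
            simp only [adjA, Matrix.of_apply]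
            rw [boole_mul']
            apply if_congr _ rfl rfl
            constructor
            · rintro ⟨⟨h1, h2⟩, h3, h4, h5⟩
              exact ⟨h1.symm, fun h => h2 h.symm, fun h => w.prop (h1 ▸ h.symm), h3, h5⟩
            · rintro ⟨h1, h2, h3, h4, h5⟩
              exact ⟨⟨h1.symm, fun h => h2 h.symm⟩, h4, fun h => hbc (h1 ▸ h), h5⟩
      _ = ∑ p : Fin n × Fin n, if p.1 ≠ p.2 then
            (if p.1 = b ∧ p.2 ≠ a ∧ p.2 ≠ b ∧ p.2 ≠ c ∧ p.2 ≠ d then (1:ℕ) else 0) else 0 :=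
          sum_tvtx n (fun p : Fin n × Fin n =>
            if p.1 = b ∧ p.2 ≠ a ∧ p.2 ≠ b ∧ p.2 ≠ c ∧ p.2 ≠ d then (1:ℕ) else 0)
      _ = ∑ p : Fin n × Fin n,
            if p.1 = b ∧ p.2 ≠ a ∧ p.2 ≠ b ∧ p.2 ≠ c ∧ p.2 ≠ d then (1:ℕ) else 0 := by
            apply Finset.sum_congr rfl
            intro p _
            by_cases h : p.1 = b ∧ p.2 ≠ a ∧ p.2 ≠ b ∧ p.2 ≠ c ∧ p.2 ≠ d
            · have hne : p.1 ≠ p.2 := fun he => h.2.2.1 (he ▸ h.1)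
              simp [hne]
            · simp [h]
      _ = ∑ x : Fin n, ∑ y : Fin n,
            if x = b ∧ y ≠ a ∧ y ≠ b ∧ y ≠ c ∧ y ≠ d then (1:ℕ) else 0 :=
          Fintype.sum_prod_type _
      _ = ∑ x : Fin n, if x = b then
            (∑ y : Fin n, if y ≠ a ∧ y ≠ b ∧ y ≠ c ∧ y ≠ d then (1:ℕ) else 0) else 0 := by
            apply Finset.sum_congr rfl
            intro x _
            by_cases hx : x = b <;> simp [hx]
      _ = n - 4 := by
            rw [Finset.sum_ite_eq' Finset.univ b, if_pos (Finset.mem_univ b),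
              sum_boole_ne4 n a b c d hab hac had hbc hbd hcd]
  ·
    have hpow : (adjA n) ^ 4 = (adjA n) ^ 2 * (adjA n) ^ 2 := by
      rw [← pow_add]
    rw [hpow, Matrix.mul_apply]
    calc
      ∑ w : TVtx n, ((adjA n) ^ 2) ⟨(a, b), hab⟩ w * ((adjA n) ^ 2) w ⟨(c, d), hcd⟩
          = ∑ w : TVtx n, (fun p : Fin n × Fin n =>
              if (p.1 ≠ a ∧ p.1 ≠ b ∧ p.1 ≠ c) ∧ (p.2 ≠ p.1 ∧ p.2 ≠ b ∧ p.2 ≠ c ∧ p.2 ≠ d)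
              then (1:ℕ) else 0) w.1 := by
            apply Finset.sum_congr rfl
            intro w _
            rw [adjA_sq, adjA_sq, boole_mul']
            apply if_congr _ rfl rfl
            constructor
            · rintro ⟨⟨h1, h2, h3⟩, h4, h5, h6⟩
              exact ⟨⟨h2.symm, h1.symm, h5⟩, Ne.symm w.prop, h3.symm, h4, h6⟩
            · rintro ⟨⟨h1, h2, h3⟩, h4, h5, h6, h7⟩
              exact ⟨⟨h2.symm, h1.symm, h5.symm⟩, h6, h3, h7⟩
      _ = ∑ p : Fin n × Fin n, if p.1 ≠ p.2 then
            (if (p.1 ≠ a ∧ p.1 ≠ b ∧ p.1 ≠ c) ∧ (p.2 ≠ p.1 ∧ p.2 ≠ b ∧ p.2 ≠ c ∧ p.2 ≠ d)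
             then (1:ℕ) else 0) else 0 :=
          sum_tvtx n (fun p : Fin n × Fin n =>
            if (p.1 ≠ a ∧ p.1 ≠ b ∧ p.1 ≠ c) ∧ (p.2 ≠ p.1 ∧ p.2 ≠ b ∧ p.2 ≠ c ∧ p.2 ≠ d)
            then (1:ℕ) else 0)
      _ = ∑ p : Fin n × Fin n,
            if (p.1 ≠ a ∧ p.1 ≠ b ∧ p.1 ≠ c) ∧ (p.2 ≠ p.1 ∧ p.2 ≠ b ∧ p.2 ≠ c ∧ p.2 ≠ d)
            then (1:ℕ) else 0 := by
            apply Finset.sum_congr rfl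
            intro p _
            by_cases h : (p.1 ≠ a ∧ p.1 ≠ b ∧ p.1 ≠ c) ∧
                (p.2 ≠ p.1 ∧ p.2 ≠ b ∧ p.2 ≠ c ∧ p.2 ≠ d)
            · have hne : p.1 ≠ p.2 := Ne.symm h.2.1
              simp [hne]
            · simp [h]
      _ = ∑ x : Fin n, ∑ y : Fin n,
            if (x ≠ a ∧ x ≠ b ∧ x ≠ c) ∧ (y ≠ x ∧ y ≠ b ∧ y ≠ c ∧ y ≠ d)
            then (1:ℕ) else 0 :=
          Fintype.sum_prod_type _
      _ = ∑ x : Fin n, if x ≠ a ∧ x ≠ b ∧ x ≠ c then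
            (∑ y : Fin n, if y ≠ x ∧ y ≠ b ∧ y ≠ c ∧ y ≠ d then (1:ℕ) else 0) else 0 := by
            apply Finset.sum_congr rfl
            intro x _
            by_cases hx : x ≠ a ∧ x ≠ b ∧ x ≠ c <;> simp [hx]
      _ = ∑ x : Fin n, if x ≠ a ∧ x ≠ b ∧ x ≠ c then
            (if x = d then n - 3 else n - 4) else 0 := by
            apply Finset.sum_congr rfl
            intro x _
            by_cases hx : x ≠ a ∧ x ≠ b ∧ x ≠ c
            · rw [if_pos hx, if_pos hx]
              by_cases hxd : x = d
              · rw [if_pos hxd, ← sum_boole_ne3 n b c d hbc hbd hcd]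
                apply Finset.sum_congr rfl
                intro y _
                apply if_congr _ rfl rfl
                constructor
                · rintro ⟨-, h2, h3, h4⟩; exact ⟨h2, h3, h4⟩
                · rintro ⟨h2, h3, h4⟩; exact ⟨fun h => h4 (h.trans hxd), h2, h3, h4⟩
              · rw [if_neg hxd,
                  ← sum_boole_ne4 n x b c d hx.2.1 hx.2.2 hxd hbc hbd hcd]
            · rw [if_neg hx, if_neg hx]
      _ = ∑ x : Fin n, ((if x = d then n - 3 else 0) +
            (if x ≠ a ∧ x ≠ b ∧ x ≠ c ∧ x ≠ d then n - 4 else 0)) := by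
            apply Finset.sum_congr rfl
            intro x _
            by_cases hxd : x = d
            · simp [hxd, Ne.symm had, Ne.symm hbd, Ne.symm hcd]
            · by_cases hx : x ≠ a ∧ x ≠ b ∧ x ≠ c
              · simp [hx, hxd]
              · have : ¬(x ≠ a ∧ x ≠ b ∧ x ≠ c ∧ x ≠ d) := by tauto
                simp [hx, hxd, this]
      _ = (n - 3) + (n - 4) ^ 2 := by
            rw [Finset.sum_add_distrib, Finset.sum_ite_eq' Finset.univ d,
              if_pos (Finset.mem_univ d)]
            congr 1
            have h : (∑ x : Fin n, if x ≠ a ∧ x ≠ b ∧ x ≠ c ∧ x ≠ d then n - 4 else 0)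
                = ∑ x : Fin n, if x ∉ ({a,b,c,d} : Finset (Fin n)) then n - 4 else 0 := by
              apply Finset.sum_congr rfl; intro x _
              simp [Finset.mem_insert, not_or]
            rw [h, sum_boole_notmem]
            have hcard : ({a,b,c,d} : Finset (Fin n)).card = 4 := by
              simp [Finset.card_insert_of_notMem, hab, hac, had, hbc, hbd, hcd]
            rw [hcard, sq]
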